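/- arXiv:1402.6318 — 3 statements merged into one kernel-verified Lean document; each statement's English description precedes it below -/
import Mathlib

section
/- With the setup of the previous statement, conversely: if the limit of (gᵢ - 1)/nᵢ is +∞, then the series ∑_{j=1}^{∞} dⱼ/nⱼ diverges. -/
open Filter

theorem stmt_2_general (g₀ : ℝ) (g n d : ℕ → ℝ)
    (heq : ∀ i, (g i - 1) / n i = (g₀ - 1) + (1 / 2) * ∑ j ∈ Finset.Icc 1 i, d j / n j)
    (hlim : Tendsto (fun i => (g i - 1) / n i) atTop atTop) :
    Tendsto (fun i => ∑ j ∈ Finset.Icc 1 i, d j / n j) atTop atTop := by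
  have hsum : (fun i => ∑ j ∈ Finset.Icc 1 i, d j / n j)
      = fun i => 2 * ((g i - 1) / n i - (g₀ - 1)) := by
    funext i
    linarith [heq i]
  rw [hsum]
  exact (tendsto_atTop_add_const_right _ _ hlim).const_mul_atTop two_pos

/-- Conversely, if the genus of the tower is infinite, the normalized different series diverges. -/
theorem stmt_2 (g₀ : ℝ) (g n d : ℕ → ℝ)
    (hn0 : n 0 = 1) (hnpos : ∀ i, 0 < n i) (hnmono : ∀ i, n i ≤ n (i + 1))
    (hd : ∀ j, 0 ≤ d j)
    (heq : ∀ i, (g i - 1) / n i = (g₀ - 1) + (1 / 2) * ∑ j ∈ Finset.Icc 1 i, d j / n j)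
    (hlim : Tendsto (fun i => (g i - 1) / n i) atTop atTop) :
    Tendsto (fun i => ∑ j ∈ Finset.Icc 1 i, d j / n j) atTop atTop :=
  stmt_2_general g₀ g n d heq hlim
end

section
/- Let p be a prime and let v : it be a discrete valuation on a field F of characteristic p (v : F → ℤ ∪ {∞}, surjective onto ℤ on F^×). Let z ∈ F be such that v(z) < 0 and gcd(v(z), p) = 1. Then for every u ∈ F, v(z - (u^p - u)) ≤ v(z) < 0. In particular v(z - (u^p - u)) ≠ 0 for all u. -/
namespace AddValuation

variable {R Γ₀ : Type*} [Ring R] [LinearOrderedAddCommMonoidWithTop Γ₀]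

theorem map_sub_le_left_of_ne (v : AddValuation R Γ₀) {x y : R} (h : v x ≠ v y) :
    v (x - y) ≤ v x := by
  rw [sub_eq_add_neg, v.map_add_of_distinct_val (by rwa [v.map_neg]), v.map_neg]
  exact min_le_left _ _

variable {v : AddValuation R (WithTop ℤ)}

theorem map_pow_sub_self_of_neg {u : R} {k : ℤ} (hu : v u = k) (hk : k < 0) {n : ℕ}
    (hn : 2 ≤ n) : v (u ^ n - u) = ((n * k : ℤ) : WithTop ℤ) := by
  have hpow : v (u ^ n) = ((n * k : ℤ) : WithTop ℤ) := by
    rw [v.map_pow, hu]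
    norm_cast
  have hlt : v (u ^ n) < v u := by
    rw [hpow, hu]
    have : (2 : ℤ) ≤ n := by exact_mod_cast hn
    exact_mod_cast (by nlinarith : (n : ℤ) * k < k)
  rw [v.map_sub_eq_of_lt_left hlt, hpow]

/-- The key point: when `v u < 0` the value `v (u ^ n - u) = n • v u` is divisible by `n`,
and otherwise it is nonnegative. -/
theorem ne_map_pow_sub_self {z : R} {m : ℤ} (hz : v z = m) (hm : m < 0) {n : ℕ}
    (hn : 2 ≤ n) (hmn : ¬ (n : ℤ) ∣ m) (u : R) : v z ≠ v (u ^ n - u) := by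
  rcases lt_or_ge (v u) 0 with hu | hu
  · obtain ⟨k, hk⟩ := WithTop.ne_top_iff_exists.mp hu.ne_top
    have hkneg : k < 0 := by rw [← hk] at hu; exact_mod_cast hu
    rw [hz, map_pow_sub_self_of_neg hk.symm hkneg hn]
    intro h
    exact hmn ⟨k, by exact_mod_cast h⟩
  · have hzneg : v z < 0 := by rw [hz]; exact_mod_cast hm
    have hpow : 0 ≤ v (u ^ n) := by
      rw [v.map_pow]
      exact nsmul_nonneg hu n
    exact (hzneg.trans_le (v.map_le_sub hpow hu)).ne

end AddValuation

theorem stmt_5_general (p : ℕ) (hp : p.Prime) (F : Type*) [Field F]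
    (v : AddValuation F (WithTop ℤ))
    (z : F) (m : ℤ) (hz : v z = (m : WithTop ℤ)) (hm : m < 0) (hgcd : Int.gcd m p = 1) :
    ∀ u : F, v (z - (u ^ p - u)) ≤ v z ∧ v z < 0 ∧ v (z - (u ^ p - u)) ≠ 0 := by
  intro u
  have hzneg : v z < 0 := by rw [hz]; exact_mod_cast hm
  have hpm : ¬ (p : ℤ) ∣ m := fun h => by
    rw [Int.gcd_eq_natAbs_right h, Int.natAbs_natCast] at hgcd
    exact hp.one_lt.ne' hgcd
  have hle := v.map_sub_le_left_of_ne (v.ne_map_pow_sub_self hz hm hp.two_le hpm u)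
  exact ⟨hle, hzneg, (hle.trans_lt hzneg).ne⟩

/-- Key valuation step for Artin–Schreier towers: if `v z < 0` and `gcd(v z, p) = 1`,
then `v (z - (u^p - u)) ≤ v z < 0` for every `u`. -/
theorem stmt_5 (p : ℕ) (hp : p.Prime) (F : Type*) [Field F] [CharP F p]
    (v : AddValuation F (WithTop ℤ))
    (hsurj : ∀ n : ℤ, ∃ x : F, x ≠ 0 ∧ v x = (n : WithTop ℤ))
    (z : F) (m : ℤ) (hz : v z = (m : WithTop ℤ)) (hm : m < 0) (hgcd : Int.gcd m p = 1) :
    ∀ u : F, v (z - (u ^ p - u)) ≤ v z ∧ v z < 0 ∧ v (z - (u ^ p - u)) ≠ 0 :=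
  stmt_5_general p hp F v z m hz hm hgcd
end

section
/- In the setting of Example 4.1 (basic function field K(x,y) with y^{p+1} + y = x^{p+1}/f(x), deg f = p+1−r, gcd(r, p+1) = 1, f(0) ≠ 0, [K(x,y):K(x)] = p+1): if Q' is a zero of y^p + 1 in K(x,y) lying over P_x (the zero of x in K(x)), and v_{P_x}(f(x)) = 0, then p · v_{Q'}(y + 1) = (p+1) · e(Q'|P_x), and consequently e(Q'|P_x) = p. -/
/-!
In characteristic `p`, `y ^ (p + 1) + y = y * (y + 1) ^ p`, and `y` is a unit at a zero of
`y ^ p + 1 = (y + 1) ^ p`; so the valuation of the left side is `p • w (y + 1)`, while that of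
`x ^ (p + 1) / f(x)` is `(p + 1) * e`. Hence `p ∣ (p + 1) * e`, so `p ∣ e` by coprimality, and
`1 ≤ e ≤ p + 1` leaves only `e = p`.
-/

namespace AddValuation

variable {R Γ₀ : Type*} [CommRing R] [LinearOrderedAddCommMonoidWithTop Γ₀]
  (w : AddValuation R Γ₀)

theorem map_eq_zero_of_pos_map_add_one {y : R} (hy : 0 < w (y + 1)) : w y = 0 := by
  have hw1 : w (-1 : R) = 0 := by rw [w.map_neg, w.map_one]
  have := w.map_add_eq_of_lt_right (x := y + 1) (y := -1) (by rwa [hw1])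
  rwa [add_neg_cancel_right, hw1] at this

variable (p : ℕ) [Fact p.Prime] [CharP R p]

theorem map_pow_char_add_one (y : R) : w (y ^ p + 1) = p • w (y + 1) := by
  rw [← w.map_pow, add_pow_char, one_pow]

theorem pos_map_add_one_of_pos_map_pow_char_add_one {y : R} (hy : 0 < w (y ^ p + 1)) :
    0 < w (y + 1) := by
  rw [map_pow_char_add_one] at hy
  by_contra! h
  exact (nsmul_nonpos h p).not_gt hy

theorem map_pow_succ_add_self_of_pos {y : R} (hy : 0 < w (y ^ p + 1)) :
    w (y ^ (p + 1) + y) = p • w (y + 1) := by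
  have hy0 : w y = 0 :=
    w.map_eq_zero_of_pos_map_add_one (w.pos_map_add_one_of_pos_map_pow_char_add_one p hy)
  rw [show y ^ (p + 1) + y = y * (y ^ p + 1) by ring, w.map_mul, hy0, zero_add,
    map_pow_char_add_one]

end AddValuation

theorem WithTop.dvd_of_nsmul_eq_coe {p : ℕ} (hp : p ≠ 0) {a : WithTop ℤ} {n : ℤ}
    (h : p • a = n) : (p : ℤ) ∣ n := by
  induction a with
  | top =>
    obtain ⟨k, rfl⟩ := Nat.exists_eq_succ_of_ne_zero hp
    simp [succ_nsmul] at h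
  | coe a =>
    rw [← WithTop.coe_nsmul, WithTop.coe_inj] at h
    exact ⟨a, by rw [← h, nsmul_eq_mul]⟩

theorem Nat.eq_of_prime_dvd_succ_mul {p e : ℕ} (hp : p.Prime) (he1 : 1 ≤ e) (hele : e ≤ p + 1)
    (h : p ∣ (p + 1) * e) : e = p := by
  have hpe : p ∣ e :=
    (Nat.coprime_self_add_right.mpr (Nat.coprime_one_right p)).dvd_of_dvd_mul_left h
  rcases (Nat.le_of_dvd he1 hpe).eq_or_lt with hpe' | _
  · exact hpe'.symm
  · have he : e = p + 1 := by omega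
    rw [he, Nat.dvd_add_right (dvd_refl p)] at hpe
    exact absurd (Nat.dvd_one.mp hpe) hp.one_lt.ne'

/-- Example 4.1: a zero `Q'` of `y^p + 1` over `P_x` satisfies
`p · v_{Q'}(y+1) = (p+1) · e(Q'|P_x)` and hence `e(Q'|P_x) = p`. -/
theorem stmt_11 {K L : Type*} [Field K] [Field L] [Algebra K L]
    (p : ℕ) (hp : p.Prime) [CharP L p]
    (x y : L) (f : Polynomial K)
    (e : ℕ) (he1 : 1 ≤ e) (hele : e ≤ p + 1)   -- e ≤ [K(x,y):K(x)] = p+1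
    (heq : y ^ (p + 1) + y = x ^ (p + 1) / Polynomial.aeval x f)
    (w : AddValuation L (WithTop ℤ))
    (hwf : w (Polynomial.aeval x f) = 0)       -- v_{P_x}(f(x)) = 0
    (hwx : w x = ((e : ℤ) : WithTop ℤ))        -- w(x) = e(Q'|P_x)·v_{P_x}(x) = e
    (hQ' : 0 < w (y ^ p + 1)) :                -- Q' is a zero of y^p + 1
    p • w (y + 1) = ((((p + 1) * e : ℕ) : ℤ) : WithTop ℤ) ∧ e = p := by
  have := Fact.mk hp
  have hrhs :
      w (x ^ (p + 1) / Polynomial.aeval x f) = ((((p + 1) * e : ℕ) : ℤ) : WithTop ℤ) := by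
    rw [w.map_div, w.map_pow, hwx, hwf, sub_zero, ← WithTop.coe_nsmul]
    norm_cast
  have key : p • w (y + 1) = ((((p + 1) * e : ℕ) : ℤ) : WithTop ℤ) := by
    rw [← w.map_pow_succ_add_self_of_pos p hQ', heq, hrhs]
  refine ⟨key, Nat.eq_of_prime_dvd_succ_mul hp he1 hele ?_⟩
  exact_mod_cast WithTop.dvd_of_nsmul_eq_coe hp.ne_zero key
end
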